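/- arXiv:math/0308128 — 2 statements merged into one kernel-verified Lean document; each statement's English description precedes it below -/
import Mathlib

section
/- If U_1 and U_2 are 3-dimensional isotropic subspaces of V with L_{U_1} = L_{U_2}, then U_1 = U_2; that is, the assignment U ↦ L_U is injective on 3-dimensional isotropic subspaces. -/
/-!
By the Clifford relation `u·(w·x) + w·(u·x) = -B(u,w) x`, the annihilator `{v | v·p = 0}` of a
nonzero spinor `p` is an isotropic subspace of `V`, so it has dimension at most 3 because `B` is
nondegenerate on the 7-dimensional space `V`. If `p ∈ L_U` and `dim U = 3`, then `U` lies in this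
annihilator and hence equals it; so `U₁ = U₂` as soon as `L_{U₁}` contains a nonzero `p`.
Such a `p` exists: the operators of a basis of `U₁` square to zero and pairwise anticommute, so
each of them at most halves the dimension of the common kernel of the previous ones, which is
therefore at least `8 / 2³ = 1`.
-/

namespace SSD

noncomputable section

/-- `V` is the 7-dimensional complex vector space `ℂ^7`. -/
abbrev V7 : Type := Fin 7 → ℂ

/-- `Ŵ` is the 8-dimensional spin space, with basis (in this order):
`1, v̂₅, v̂₆, v̂₇, v̂₅v̂₆, v̂₆v̂₇, v̂₅v̂₇, v̂₅v̂₆v̂₇`. -/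
abbrev W8 : Type := Fin 8 → ℂ

/-- The constant `1/√2` as a complex number. -/
def is2 : ℂ := ((Real.sqrt 2 : ℝ) : ℂ)⁻¹

/-- The Clifford action of `v ∈ V` on `x ∈ Ŵ`:  `e₅,e₆,e₇` act by exterior
multiplication by `v̂₅,v̂₆,v̂₇`; `e₁,e₂,e₃` act by `−∂/∂v̂₇, ∂/∂v̂₆, −∂/∂v̂₅`;
`e₄` acts by `(1/√2)·(−1)^deg`. Written out in coordinates. -/
def actFun (v : V7) (x : W8) : W8 := fun k =>
  match k with
  | 0 => -(v 0) * x 3 + v 1 * x 2 - v 2 * x 1 + is2 * v 3 * x 0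
  | 1 => v 0 * x 6 - v 1 * x 4 - is2 * v 3 * x 1 + v 4 * x 0
  | 2 => v 0 * x 5 - v 2 * x 4 - is2 * v 3 * x 2 + v 5 * x 0
  | 3 => v 1 * x 5 - v 2 * x 6 - is2 * v 3 * x 3 + v 6 * x 0
  | 4 => -(v 0) * x 7 + is2 * v 3 * x 4 + v 4 * x 2 - v 5 * x 1
  | 5 => -(v 2) * x 7 + is2 * v 3 * x 5 + v 5 * x 3 - v 6 * x 2
  | 6 => -(v 1) * x 7 + is2 * v 3 * x 6 + v 4 * x 3 - v 6 * x 1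
  | 7 => -(is2 * v 3) * x 7 + v 4 * x 5 - v 5 * x 6 + v 6 * x 4

/-- The action `v · x`, packaged as a bilinear map. -/
def act : V7 →ₗ[ℂ] W8 →ₗ[ℂ] W8 :=
  LinearMap.mk₂ ℂ actFun
    (fun m m' n => by funext k; fin_cases k <;> simp [actFun] <;> ring)
    (fun c m n => by funext k; fin_cases k <;> simp [actFun] <;> ring)
    (fun m n n' => by funext k; fin_cases k <;> simp [actFun] <;> ring)
    (fun c m n => by funext k; fin_cases k <;> simp [actFun] <;> ring)

/-- The bilinear form `B` on `V`: `B(eᵢ,eⱼ) = (−1)^(i+1)` if `i+j=8`, else `0`. -/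
def Bform (u w : V7) : ℂ :=
  u 0 * w 6 + u 6 * w 0 - u 1 * w 5 - u 5 * w 1 + u 2 * w 4 + u 4 * w 2 - u 3 * w 3

/-- The quadratic form `Q(v) = B(v,v)/2` on `V`. -/
def Qform (v : V7) : ℂ := Bform v v / 2

/-- The quadratic form `Q̂` on `Ŵ`:
`Q̂ = α_∅α₅₆₇ + α₆α₅₇ − α₇α₅₆ − α₆₇α₅` in the coordinates of the basis above. -/
def Qhat (x : W8) : ℂ := x 0 * x 7 + x 2 * x 6 - x 3 * x 4 - x 5 * x 1

/-- The bilinear form `B̂(p,q) = Q̂(p+q) − Q̂(p) − Q̂(q)` on `Ŵ`. -/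
def Bhat (p q : W8) : ℂ := Qhat (p + q) - Qhat p - Qhat q

/-- A subspace `U ⊆ V` is isotropic if `B` vanishes identically on it. -/
def IsIsotropic (U : Submodule ℂ V7) : Prop :=
  ∀ u ∈ U, ∀ w ∈ U, Bform u w = 0

/-- `L_U = {x ∈ Ŵ | u·x = 0 for all u ∈ U}`. -/
def LU (U : Submodule ℂ V7) : Submodule ℂ W8 :=
  ⨅ u ∈ U, LinearMap.ker (act u)

/-- `ψ : Ŵ → V` is an invariant surjection with spinor `p` if `p ≠ 0`, `ψ(p)=0`
and `ψ(v·p) = v` for all `v ∈ V`. -/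
def IsInvSurj (ψ : W8 →ₗ[ℂ] V7) (p : W8) : Prop :=
  p ≠ 0 ∧ ψ p = 0 ∧ ∀ v : V7, ψ (act v p) = v

open Module LinearMap

section LinearAlgebra

variable {K M : Type*} [Field K] [AddCommGroup M] [Module K M] [FiniteDimensional K M]

theorem finrank_le_two_mul_finrank_inf_ker {f : Module.End K M} (hf : f * f = 0)
    {S : Submodule K M} (hS : S.map f ≤ S) :
    finrank K S ≤ 2 * finrank K (S ⊓ ker f : Submodule K M) := by
  have hrange : range (f ∘ₗ S.subtype) ≤ S ⊓ ker f := by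
    rintro _ ⟨x, rfl⟩
    exact ⟨hS ⟨x, x.2, rfl⟩, by simp [← Module.End.mul_apply, hf]⟩
  have hker : (ker (f ∘ₗ S.subtype)).map S.subtype = S ⊓ ker f := by
    rw [ker_comp, Submodule.map_comap_subtype]
  have hrank := finrank_range_add_finrank_ker (f ∘ₗ S.subtype)
  rw [← Submodule.finrank_map_subtype_eq, hker] at hrank
  have := Submodule.finrank_mono hrange
  omega

theorem finrank_le_two_pow_mul_finrank_iInf_ker {ι : Type*} [DecidableEq ι]
    (f : ι → Module.End K M) (hsq : ∀ i, f i * f i = 0)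
    (hanti : Pairwise fun i j => f i * f j = -(f j * f i)) (s : Finset ι) :
    finrank K M ≤ 2 ^ s.card * finrank K (⨅ i ∈ s, ker (f i) : Submodule K M) := by
  induction s using Finset.induction_on with
  | empty =>
    rw [show (⨅ i ∈ (∅ : Finset ι), ker (f i)) = ⊤ by simp, finrank_top]
    simp
  | insert a s ha ih =>
    set S : Submodule K M := ⨅ i ∈ s, ker (f i)
    have hS : S.map (f a) ≤ S := by
      rintro _ ⟨x, hx, rfl⟩
      simp only [S, SetLike.mem_coe, Submodule.mem_iInf, mem_ker] at hx ⊢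
      intro i hi
      rw [← Module.End.mul_apply, hanti (ne_of_mem_of_not_mem hi ha), LinearMap.neg_apply,
        Module.End.mul_apply, hx i hi, map_zero, neg_zero]
    rw [Finset.iInf_insert, inf_comm, Finset.card_insert_of_notMem ha, pow_succ, mul_assoc]
    calc finrank K M ≤ 2 ^ s.card * finrank K S := ih
      _ ≤ 2 ^ s.card * (2 * finrank K (S ⊓ ker (f a) : Submodule K M)) := by
        gcongr
        exact finrank_le_two_mul_finrank_inf_ker (hsq a) hS

theorem two_mul_finrank_le_of_le_orthogonal {B : LinearMap.BilinForm K M} (hB : B.Nondegenerate)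
    {U : Submodule K M} (hU : U ≤ B.orthogonal U) : 2 * finrank K U ≤ finrank K M := by
  have := Submodule.finrank_mono hU
  rw [LinearMap.BilinForm.finrank_orthogonal hB] at this
  have := Submodule.finrank_le U
  omega

end LinearAlgebra

lemma is2_sq : is2 ^ 2 = 2⁻¹ := by
  rw [is2, inv_pow, ← Complex.ofReal_pow, Real.sq_sqrt zero_le_two]
  norm_num

lemma act_act_add_act_act (v w : V7) (x : W8) :
    act v (act w x) + act w (act v x) = -(Bform v w) • x := by
  funext k
  change actFun v (actFun w x) k + actFun w (actFun v x) k = -(Bform v w) * x k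
  fin_cases k <;> simp only [actFun, Bform, Fin.zero_eta, Fin.mk_one, Fin.reduceFinMk] <;>
    ring_nf <;> rw [is2_sq] <;> ring

lemma act_mul_act_self_eq_zero {v : V7} (hv : Bform v v = 0) : act v * act v = 0 := by
  refine LinearMap.ext fun x => ?_
  have h := act_act_add_act_act v v x
  rw [hv, neg_zero, zero_smul, ← two_smul ℂ] at h
  exact (smul_eq_zero.1 h).resolve_left two_ne_zero

lemma act_mul_act_eq_neg {v w : V7} (h : Bform v w = 0) :
    act v * act w = -(act w * act v) := by
  refine LinearMap.ext fun x => ?_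
  have h' := act_act_add_act_act v w x
  rw [h, neg_zero, zero_smul] at h'
  exact eq_neg_of_add_eq_zero_left h'

lemma Bform_comm (u w : V7) : Bform u w = Bform w u := by
  simp only [Bform]; ring

def Bform.toBilin : LinearMap.BilinForm ℂ V7 :=
  mk₂ ℂ Bform
    (fun _ _ _ => by simp only [Bform, Pi.add_apply]; ring)
    (fun _ _ _ => by simp only [Bform, Pi.smul_apply, smul_eq_mul]; ring)
    (fun _ _ _ => by simp only [Bform, Pi.add_apply]; ring)
    (fun _ _ _ => by simp only [Bform, Pi.smul_apply, smul_eq_mul]; ring)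

lemma Bform.toBilin_apply (u w : V7) : Bform.toBilin u w = Bform u w := rfl

lemma Bform.toBilin_nondegenerate : Bform.toBilin.Nondegenerate := by
  refine (IsRefl.nondegenerate_iff_separatingLeft
    fun u w h => by rwa [Bform.toBilin_apply, Bform_comm] at h).2 fun v h => ?_
  funext i
  -- `B` pairs the coordinates `i` and `6 - i`
  have := h (Pi.single (6 - i) 1)
  fin_cases i <;> simpa [Bform.toBilin_apply, Bform] using this

lemma finrank_le_three_of_isIsotropic {U : Submodule ℂ V7} (hU : IsIsotropic U) :
    finrank ℂ U ≤ 3 := by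
  have hle : U ≤ Bform.toBilin.orthogonal U := fun u hu =>
    LinearMap.BilinForm.mem_orthogonal_iff.2 fun w hw => hU w hw u hu
  have := two_mul_finrank_le_of_le_orthogonal Bform.toBilin_nondegenerate hle
  rw [finrank_fin_fun] at this
  omega

def ann (p : W8) : Submodule ℂ V7 := ker (act.flip p)

lemma mem_ann {p : W8} {v : V7} : v ∈ ann p ↔ act v p = 0 := Iff.rfl

lemma mem_LU_iff_le_ann {U : Submodule ℂ V7} {p : W8} : p ∈ LU U ↔ U ≤ ann p := by
  simp [LU, Submodule.mem_iInf, SetLike.le_def, mem_ann]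

lemma isIsotropic_ann {p : W8} (hp : p ≠ 0) : IsIsotropic (ann p) := by
  intro u hu w hw
  have h := act_act_add_act_act u w p
  rw [mem_ann.1 hu, mem_ann.1 hw, map_zero, map_zero, add_zero, eq_comm, neg_smul,
    neg_eq_zero] at h
  exact (smul_eq_zero.1 h).resolve_right hp

lemma eq_ann_of_mem_LU {U : Submodule ℂ V7} (hdim : finrank ℂ U = 3) {p : W8} (hp : p ≠ 0)
    (hpU : p ∈ LU U) : U = ann p :=
  Submodule.eq_of_le_of_finrank_le (mem_LU_iff_le_ann.1 hpU)
    (hdim ▸ finrank_le_three_of_isIsotropic (isIsotropic_ann hp))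

lemma LU_ne_bot {U : Submodule ℂ V7} (hU : IsIsotropic U) : LU U ≠ ⊥ := by
  let b := finBasis ℂ U
  have hB : ∀ i j, Bform (b i) (b j) = 0 := fun i j => hU _ (b i).2 _ (b j).2
  have hbound := finrank_le_two_pow_mul_finrank_iInf_ker (fun i => act (b i))
    (fun i => act_mul_act_self_eq_zero (hB i i)) (fun i j _ => act_mul_act_eq_neg (hB i j))
    Finset.univ
  have hle : (⨅ i ∈ Finset.univ, ker (act (b i))) ≤ LU U := by
    intro p hp
    simp only [Finset.mem_univ, iInf_true, Submodule.mem_iInf, mem_ker] at hp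
    have hzero : act.flip p ∘ₗ U.subtype = 0 := b.ext hp
    exact mem_LU_iff_le_ann.2 fun v hv => LinearMap.congr_fun hzero ⟨v, hv⟩
  intro hbot
  rw [hbot, le_bot_iff] at hle
  rw [hle, finrank_bot, finrank_fin_fun] at hbound
  omega

theorem statement_2_general (U₁ U₂ : Submodule ℂ V7)
    (hdim₁ : Module.finrank ℂ U₁ = 3) (hiso₁ : IsIsotropic U₁)
    (hdim₂ : Module.finrank ℂ U₂ = 3)
    (hL : LU U₁ = LU U₂) : U₁ = U₂ := by
  obtain ⟨p, hp, hp0⟩ := Submodule.exists_mem_ne_zero_of_ne_bot (LU_ne_bot hiso₁)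
  rw [eq_ann_of_mem_LU hdim₁ hp0 hp, eq_ann_of_mem_LU hdim₂ hp0 (hL ▸ hp)]

/-- the assignment `U ↦ L_U` is injective on 3-dimensional
isotropic subspaces. -/
theorem statement_2 (U₁ U₂ : Submodule ℂ V7)
    (hdim₁ : Module.finrank ℂ U₁ = 3) (hiso₁ : IsIsotropic U₁)
    (hdim₂ : Module.finrank ℂ U₂ = 3) (hiso₂ : IsIsotropic U₂)
    (hL : LU U₁ = LU U₂) : U₁ = U₂ :=
  statement_2_general U₁ U₂ hdim₁ hiso₁ hdim₂ hL

end
end SSD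
end

section
/- For every p ∈ Ŵ, the trilinear form on V defined by w(a,b,c) = B̂(a·(b·(c·p)), p) is skew-symmetric: it changes sign under the transposition of any two of its three arguments. -/
namespace SSD

noncomputable section

lemma is2_sq_s14 : is2 * is2 = 1/2 := by
  rw [is2, ← mul_inv]
  norm_cast
  rw [Real.mul_self_sqrt (by norm_num : (0:ℝ) ≤ 2)]
  norm_num

lemma bhat_eq (x y : W8) : Bhat x y =
    x 0 * y 7 + x 7 * y 0 + x 2 * y 6 + x 6 * y 2
      - x 3 * y 4 - x 4 * y 3 - x 5 * y 1 - x 1 * y 5 := by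
  simp only [Bhat, Qhat, Pi.add_apply]; ring

lemma fmk0 (h : 0 < 8) : (⟨0, h⟩ : Fin 8) = (0 : Fin 8) := rfl
lemma fmk1 (h : 1 < 8) : (⟨1, h⟩ : Fin 8) = (1 : Fin 8) := rfl
lemma fmk2 (h : 2 < 8) : (⟨2, h⟩ : Fin 8) = (2 : Fin 8) := rfl
lemma fmk3 (h : 3 < 8) : (⟨3, h⟩ : Fin 8) = (3 : Fin 8) := rfl
lemma fmk4 (h : 4 < 8) : (⟨4, h⟩ : Fin 8) = (4 : Fin 8) := rfl
lemma fmk5 (h : 5 < 8) : (⟨5, h⟩ : Fin 8) = (5 : Fin 8) := rfl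
lemma fmk6 (h : 6 < 8) : (⟨6, h⟩ : Fin 8) = (6 : Fin 8) := rfl
lemma fmk7 (h : 7 < 8) : (⟨7, h⟩ : Fin 8) = (7 : Fin 8) := rfl

lemma clifford (u w : V7) (x : W8) :
    act u (act w x) = (-(Bform u w)) • x - act w (act u x) := by
  have hs := is2_sq_s14
  funext k
  fin_cases k <;>
    simp only [act, LinearMap.mk₂_apply, actFun, Bform, Pi.sub_apply, Pi.smul_apply,
      smul_eq_mul, fmk0, fmk1, fmk2, fmk3, fmk4, fmk5, fmk6, fmk7] <;>
  [ linear_combination (2 * u 3 * w 3 * x 0) * hs;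
    linear_combination (2 * u 3 * w 3 * x 1) * hs;
    linear_combination (2 * u 3 * w 3 * x 2) * hs;
    linear_combination (2 * u 3 * w 3 * x 3) * hs;
    linear_combination (2 * u 3 * w 3 * x 4) * hs;
    linear_combination (2 * u 3 * w 3 * x 5) * hs;
    linear_combination (2 * u 3 * w 3 * x 6) * hs;
    linear_combination (2 * u 3 * w 3 * x 7) * hs ]

lemma bhat_sub_smul (c : ℂ) (x y p : W8) :
    Bhat (c • x - y) p = c * Bhat x p - Bhat y p := by
  simp only [bhat_eq, Pi.sub_apply, Pi.smul_apply, smul_eq_mul]; ring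

lemma bhat_act_self (v : V7) (p : W8) : Bhat (act v p) p = 0 := by
  simp only [bhat_eq, act, LinearMap.mk₂_apply, actFun]; ring

lemma swap_outer (u w : V7) (q p : W8) :
    Bhat (act u (act w q)) p = - Bform u w * Bhat q p - Bhat (act w (act u q)) p := by
  rw [clifford, bhat_sub_smul]; try ring

lemma swap_inner (v u w : V7) (p : W8) :
    Bhat (act v (act u (act w p))) p
      = - Bform u w * Bhat (act v p) p - Bhat (act v (act w (act u p))) p := by
  rw [clifford u w p, map_sub, map_smul, bhat_sub_smul]; try ring

/-- the trilinear form `w(a,b,c) = B̂(a·(b·(c·p)), p)` on `V`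
changes sign under the transposition of any two of its three arguments. -/
theorem statement_14 (p : W8) (a b c : V7) :
    Bhat (act b (act a (act c p))) p = - Bhat (act a (act b (act c p))) p ∧
    Bhat (act a (act c (act b p))) p = - Bhat (act a (act b (act c p))) p ∧
    Bhat (act c (act b (act a p))) p = - Bhat (act a (act b (act c p))) p := by
  have h1 : Bhat (act b (act a (act c p))) p = - Bhat (act a (act b (act c p))) p := by
    rw [swap_outer b a (act c p) p, bhat_act_self]
    ring
  have h2 : Bhat (act a (act c (act b p))) p = - Bhat (act a (act b (act c p))) p := by
    rw [swap_inner a c b p, bhat_act_self]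
    ring
  refine ⟨h1, h2, ?_⟩
  rw [swap_outer c b (act a p) p, bhat_act_self, swap_inner b c a p, bhat_act_self,
    swap_outer b a (act c p) p, bhat_act_self]
  ring

end
end SSD
end
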